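/- Boundedness of meandering tip trajectories off resonance: let c : ℝ → ℝ² and ω : ℝ → ℝ be continuous and T-periodic for some T > 0, let θ, R solve dθ/dt = ω(t), dR/dt = exp(τθ(t))·c(t), and set Θ = ∫₀ᵀ ω(s)ds. If Θ is not an integer multiple of 2π, then the trajectory R is bounded: there exist p ∈ ℝ² and M ≥ 0 with ‖R(t) − p‖ ≤ M for all t ∈ ℝ. -/

import Mathlib

open Matrix Real intervalIntegral

/-- The 2×2 real matrix τ = [[0,-1],[1,0]], so that exp(τθ) is rotation by angle θ. -/
noncomputable def tau : Matrix (Fin 2) (Fin 2) ℝ := !![0, -1; 1, 0]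

/-!
Since `θ (t + T) = θ t + Θ` and `c` is `T`-periodic, the velocity satisfies
`R' (t + T) = exp (Θ τ) R' t`, so `R (t + T) = exp (Θ τ) R t + b` for a constant `b`:
the time-`T` map is a rotation by `Θ`. Off resonance `det (1 - exp (Θ τ)) = 2 - 2 cos Θ ≠ 0`,
so this rotation has a centre `p`; then `‖R t - p‖` is continuous and `T`-periodic, hence bounded.
-/

open NormedSpace Function

theorem Matrix.exp_smul_eq_cos_smul_one_add_sin_smul {n : Type*} [Fintype n] [DecidableEq n]
    {J : Matrix n n ℝ} (hJ : J * J = -1) (x : ℝ) :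
    exp (x • J) = cos x • (1 : Matrix n n ℝ) + sin x • J := by
  -- `map_exp` needs a Banach-algebra norm on matrices; `exp` itself does not depend on it.
  open scoped Matrix.Norms.Operator in
  have hcont : Continuous (Complex.liftAux J hJ) :=
    (Complex.liftAux J hJ).toLinearMap.continuous_of_finiteDimensional
  have := map_exp (Complex.liftAux J hJ) hcont (x * Complex.I)
  rw [← Complex.exp_eq_exp_ℂ, Complex.exp_mul_I] at this
  simp only [← Complex.ofReal_cos, ← Complex.ofReal_sin, Complex.liftAux_apply, Complex.add_re,
    Complex.ofReal_re, Complex.mul_re, Complex.I_re, mul_zero, Complex.ofReal_im, Complex.I_im,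
    mul_one, sub_self, add_zero, Algebra.algebraMap_eq_smul_one, Complex.add_im, Complex.mul_im,
    zero_add, zero_smul] at this
  exact this.symm

theorem Matrix.exp_mem_unitaryGroup_of_mem_skewAdjoint {𝕜 n : Type*} [RCLike 𝕜] [Fintype n]
    [DecidableEq n] {S : Matrix n n 𝕜} (hS : S ∈ skewAdjoint (Matrix n n 𝕜)) :
    exp S ∈ unitaryGroup n 𝕜 := by
  rw [Unitary.mem_iff, star_eq_conjTranspose, ← exp_conjTranspose, ← star_eq_conjTranspose,
    skewAdjoint.mem_iff.mp hS, ← Matrix.exp_add_of_commute _ _ (Commute.refl S).neg_left,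
    ← Matrix.exp_add_of_commute _ _ (Commute.refl S).neg_right, neg_add_cancel, add_neg_cancel,
    NormedSpace.exp_zero, and_self]

theorem Matrix.toEuclideanLin_exp_add_smul {𝕜 n : Type*} [RCLike 𝕜] [Fintype n]
    [DecidableEq n] (A : Matrix n n 𝕜) (x y : 𝕜) (v : EuclideanSpace 𝕜 n) :
    toEuclideanLin (exp ((x + y) • A)) v =
      toEuclideanLin (exp (x • A)) (toEuclideanLin (exp (y • A)) v) := by
  rw [add_smul, Matrix.exp_add_of_commute _ _ (((Commute.refl A).smul_left x).smul_right y)]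
  simp only [toLpLin_mul_same, LinearMap.coe_comp, Function.comp_apply]

theorem add_period_eq_add_integral_of_hasDerivAt {E : Type*} [NormedAddCommGroup E]
    [NormedSpace ℝ E] [CompleteSpace E] {f g : ℝ → E} {T : ℝ} (hg : Continuous g)
    (hper : Periodic g T) (hf : ∀ t, HasDerivAt f (g t) t) (t : ℝ) :
    f (t + T) = f t + ∫ s in 0..T, g s := by
  have h := hper.intervalIntegral_add_eq t 0
  rw [zero_add,
    integral_eq_sub_of_hasDerivAt (fun s _ => hf s) (hg.intervalIntegrable _ _)] at h
  rw [← h, add_sub_cancel]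

theorem add_period_eq_map_add_of_hasDerivAt {E : Type*} [NormedAddCommGroup E]
    [NormedSpace ℝ E] {R g : ℝ → E} {T : ℝ} (L : E →L[ℝ] E) (hR : ∀ t, HasDerivAt R (g t) t)
    (hg : ∀ t, g (t + T) = L (g t)) (t : ℝ) :
    R (t + T) = L (R t) + (R T - L (R 0)) := by
  have hderiv : ∀ s, HasDerivAt (fun s => R (s + T) - L (R s)) 0 s := fun s => by
    have h := ((hR (s + T)).comp_add_const s T).sub (L.hasFDerivAt.comp_hasDerivAt s (hR s))
    rwa [hg s, sub_self] at h
  have := is_const_of_deriv_eq_zero (fun s => (hderiv s).differentiableAt)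
    (fun s => (hderiv s).deriv) t 0
  rw [zero_add] at this
  rw [← this, add_sub_cancel]

theorem ContinuousLinearMap.exists_apply_add_eq_self_of_isUnit_one_sub {𝕜 E : Type*} [Ring 𝕜]
    [TopologicalSpace E] [AddCommGroup E] [Module 𝕜 E] [IsTopologicalAddGroup E]
    {L : E →L[𝕜] E} (h : IsUnit (1 - L)) (b : E) : ∃ p, L p + b = p := by
  obtain ⟨u, hu⟩ := h
  refine ⟨(↑u⁻¹ : E →L[𝕜] E) b, ?_⟩
  have : (1 - L) ((↑u⁻¹ : E →L[𝕜] E) b) = b := by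
    rw [← hu, ← mul_apply_eq_comp, Units.mul_inv, one_apply_eq_self]
  rw [_root_.sub_apply, one_apply_eq_self, sub_eq_iff_eq_add'] at this
  exact this.symm

theorem periodic_norm_sub_of_add_period_eq {E F : Type*} [SeminormedAddCommGroup E]
    [FunLike F E E] [AddMonoidHomClass F E E] {L : F} (hL : ∀ v, ‖L v‖ = ‖v‖) {R : ℝ → E}
    {T : ℝ} {b p : E}
    (hR : ∀ t, R (t + T) = L (R t) + b) (hp : L p + b = p) :
    Periodic (fun t => ‖R t - p‖) T := fun t => by
  change ‖R (t + T) - p‖ = ‖R t - p‖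
  rw [hR t]
  nth_rewrite 1 [← hp]
  rw [add_sub_add_right_eq_sub, ← map_sub, hL]

theorem tau_mul_tau : tau * tau = -1 := by
  ext i j; fin_cases i <;> fin_cases j <;> simp [tau]

theorem tau_mem_skewAdjoint : tau ∈ skewAdjoint (Matrix (Fin 2) (Fin 2) ℝ) := by
  rw [skewAdjoint.mem_iff]; ext i j; fin_cases i <;> fin_cases j <;> simp [tau]

theorem det_one_sub_exp_smul_tau (x : ℝ) : (1 - exp (x • tau)).det = 2 - 2 * cos x := by
  have h : 1 - exp (x • tau) = !![1 - cos x, sin x; -sin x, 1 - cos x] := by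
    rw [exp_smul_eq_cos_smul_one_add_sin_smul tau_mul_tau]
    ext i j
    fin_cases i <;> fin_cases j <;> simp [tau]
  rw [h, det_fin_two_of]
  linear_combination sin_sq_add_cos_sq x

theorem norm_toEuclideanCLM_exp_smul_tau_apply (x : ℝ) (v : EuclideanSpace ℝ (Fin 2)) :
    ‖toEuclideanCLM (𝕜 := ℝ) (exp (x • tau)) v‖ = ‖v‖ :=
  ContinuousLinearMap.norm_map_of_mem_unitary (Unitary.map_mem _
    (exp_mem_unitaryGroup_of_mem_skewAdjoint (skewAdjoint.smul_mem x tau_mem_skewAdjoint))) v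

theorem isUnit_one_sub_toEuclideanCLM_exp_smul_tau {x : ℝ} (hx : cos x ≠ 1) :
    IsUnit (1 - toEuclideanCLM (𝕜 := ℝ) (n := Fin 2) (exp (x • tau))) := by
  have : IsUnit (1 - exp (x • tau)) := by
    rw [isUnit_iff_isUnit_det, det_one_sub_exp_smul_tau, isUnit_iff_ne_zero]
    contrapose! hx
    linarith
  simpa using this.map (toEuclideanCLM (𝕜 := ℝ) (n := Fin 2))

theorem tip_trajectory_bounded_off_resonance_general
    (T : ℝ) (hT : 0 < T)
    (c : ℝ → EuclideanSpace ℝ (Fin 2)) (ω : ℝ → ℝ)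
    (hω_cont : Continuous ω)
    (hc_per : Function.Periodic c T) (hω_per : Function.Periodic ω T)
    (θ : ℝ → ℝ) (R : ℝ → EuclideanSpace ℝ (Fin 2))
    (hθ : ∀ t, HasDerivAt θ (ω t) t)
    (hR : ∀ t, HasDerivAt R (Matrix.toEuclideanLin (NormedSpace.exp (θ t • tau)) (c t)) t)
    (hΘ : ∀ k : ℤ, (∫ s in (0:ℝ)..T, ω s) ≠ k * (2 * π)) :
    ∃ (p : EuclideanSpace ℝ (Fin 2)) (M : ℝ), 0 ≤ M ∧ ∀ t : ℝ, ‖R t - p‖ ≤ M := by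
  set Θ := ∫ s in (0:ℝ)..T, ω s
  set U := toEuclideanCLM (𝕜 := ℝ) (n := Fin 2) (exp (Θ • tau))
  have hθ_add : ∀ t, θ (t + T) = θ t + Θ :=
    add_period_eq_add_integral_of_hasDerivAt hω_cont hω_per hθ
  have hR_add := add_period_eq_map_add_of_hasDerivAt U hR fun t => by
    rw [hc_per, hθ_add, add_comm, toEuclideanLin_exp_add_smul]
    rfl
  have hcos : cos Θ ≠ 1 := fun h => by
    obtain ⟨k, hk⟩ := (cos_eq_one_iff Θ).mp h
    exact hΘ k hk.symm
  obtain ⟨p, hp⟩ := ContinuousLinearMap.exists_apply_add_eq_self_of_isUnit_one_sub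
    (isUnit_one_sub_toEuclideanCLM_exp_smul_tau hcos) (R T - U (R 0))
  have hper :=
    periodic_norm_sub_of_add_period_eq (norm_toEuclideanCLM_exp_smul_tau_apply Θ) hR_add hp
  have hR_cont : Continuous R := Differentiable.continuous fun t => (hR t).differentiableAt
  obtain ⟨M, hM⟩ :=
    (hper.isBounded_of_continuous hT.ne' (hR_cont.sub continuous_const).norm).bddAbove
  exact ⟨p, M, (norm_nonneg _).trans (hM (Set.mem_range_self 0)),
    fun t => hM (Set.mem_range_self t)⟩

/-- Boundedness of meandering tip trajectories off resonance: if c and ω are continuous and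
T-periodic, θ' = ω(t), R' = exp(τθ(t))c(t), and the net rotation Θ = ∫₀ᵀ ω is not an
integer multiple of 2π, then the tip trajectory R is bounded. -/
theorem tip_trajectory_bounded_off_resonance
    (T : ℝ) (hT : 0 < T)
    (c : ℝ → EuclideanSpace ℝ (Fin 2)) (ω : ℝ → ℝ)
    (hc_cont : Continuous c) (hω_cont : Continuous ω)
    (hc_per : Function.Periodic c T) (hω_per : Function.Periodic ω T)
    (θ : ℝ → ℝ) (R : ℝ → EuclideanSpace ℝ (Fin 2))
    (hθ : ∀ t, HasDerivAt θ (ω t) t)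
    (hR : ∀ t, HasDerivAt R (Matrix.toEuclideanLin (NormedSpace.exp (θ t • tau)) (c t)) t)
    (hΘ : ∀ k : ℤ, (∫ s in (0:ℝ)..T, ω s) ≠ k * (2 * π)) :
    ∃ (p : EuclideanSpace ℝ (Fin 2)) (M : ℝ), 0 ≤ M ∧ ∀ t : ℝ, ‖R t - p‖ ≤ M :=
  tip_trajectory_bounded_off_resonance_general T hT c ω hω_cont hc_per hω_per θ R hθ hR hΘ
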